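/- arXiv:1711.09720 — 3 statements merged into one kernel-verified Lean document; each statement's English description precedes it below -/
import Mathlib

section
/- Let a : ℝ → (0,∞) be even, smooth, satisfying a(ξ) ∼ a(ξ') whenever ξ ∼ ξ', |a'(ξ)| ≲ a(ξ)(1+ξ^2)^{-1/2}, and |a''(ξ)| ≲ a(ξ)(1+ξ^2)^{-1}. Suppose n1, n2, n3, n4 ∈ ℤ with n1+n2+n3+n4 = 0, |n1| ∼ |n2| ∼ |n3| ∼ |n4| ∼ N for a dyadic N, and |n2+n3| ≪ N, |n1+n2| ≪ N. Then |a(n1)n1 + a(n2)n2 + a(n3)n3 + a(n4)n4| ≲ (a(N)/N) |n2+n3| |n1+n2|. -/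
/-!
As `a` is even, `f ξ = a ξ * ξ` is odd, so under `n₁ + n₂ + n₃ + n₄ = 0` the sum `∑ f nᵢ` is the
second difference `f (x + e + l) - f (x + l) - f (x + e) + f x` at `x = n₁`, `e = -(n₁ + n₂)`,
`l = n₂ + n₃`. Two mean value theorems turn it into `f'' d * e * l` with `d` within `N / 4` of `n₁`,
and the symbol bounds give `|f'' d| ≲ a d / |d| ≲ a N / N`.
-/

open Real Set

theorem exists_mem_uIcc_sub_eq_deriv_mul {f : ℝ → ℝ} (hf : Differentiable ℝ f) (x y : ℝ) :
    ∃ c ∈ uIcc x y, f y - f x = deriv f c * (y - x) := by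
  wlog hxy : x < y generalizing x y
  · rcases (not_lt.mp hxy).eq_or_lt with rfl | hyx
    · exact ⟨_, left_mem_uIcc, by simp⟩
    obtain ⟨c, hc, hfc⟩ := this y x hyx
    exact ⟨c, uIcc_comm y x ▸ hc, by linarith⟩
  obtain ⟨c, hc, hfc⟩ :=
    exists_deriv_eq_slope f hxy hf.continuous.continuousOn hf.differentiableOn
  exact ⟨c, Icc_subset_uIcc (Ioo_subset_Icc_self hc),
    by rw [hfc, div_mul_cancel₀ _ (sub_pos.mpr hxy).ne']⟩

theorem exists_second_difference_eq_deriv_deriv_mul {f : ℝ → ℝ} (hf : ContDiff ℝ 2 f)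
    (x e l : ℝ) : ∃ d, |d - x| ≤ |e| + |l| ∧
      f (x + e + l) - f (x + l) - f (x + e) + f x = deriv (deriv f) d * e * l := by
  have hf₁ : Differentiable ℝ f := hf.differentiable two_ne_zero
  set g : ℝ → ℝ := fun y => f (y + e) - f y
  have hg : ∀ y, HasDerivAt g (deriv f (y + e) - deriv f y) y := fun y =>
    ((hf₁ _).hasDerivAt.comp_add_const y e).sub (hf₁ y).hasDerivAt
  obtain ⟨c, hc, hgc⟩ :=
    exists_mem_uIcc_sub_eq_deriv_mul (fun y => (hg y).differentiableAt) x (x + l)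
  obtain ⟨d, hd, hf'd⟩ := exists_mem_uIcc_sub_eq_deriv_mul hf.differentiable_deriv_two c (c + e)
  refine ⟨d, ?_, ?_⟩
  · have hdc := abs_sub_left_of_mem_uIcc hd
    have hcx := abs_sub_left_of_mem_uIcc hc
    simp only [add_sub_cancel_left] at hdc hcx
    linarith [abs_sub_le d c x]
  · simp only [g, (hg c).deriv, add_sub_cancel_left, add_right_comm x l e] at hgc hf'd
    rw [hf'd] at hgc
    linear_combination hgc

theorem Function.Odd.exists_sum_four_eq_deriv_deriv_mul {f : ℝ → ℝ} (hodd : f.Odd)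
    (hf : ContDiff ℝ 2 f) {x₁ x₂ x₃ x₄ : ℝ} (hsum : x₁ + x₂ + x₃ + x₄ = 0) :
    ∃ d, |d - x₁| ≤ |x₁ + x₂| + |x₂ + x₃| ∧
      f x₁ + f x₂ + f x₃ + f x₄ = deriv (deriv f) d * -(x₁ + x₂) * (x₂ + x₃) := by
  obtain ⟨d, hd, hdiff⟩ :=
    exists_second_difference_eq_deriv_deriv_mul hf x₁ (-(x₁ + x₂)) (x₂ + x₃)
  refine ⟨d, by rwa [abs_neg] at hd, ?_⟩
  rw [← hdiff, show x₁ + -(x₁ + x₂) + (x₂ + x₃) = x₃ by ring,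
    show x₁ + (x₂ + x₃) = -x₄ by linarith, show x₁ + -(x₁ + x₂) = -x₂ by ring, hodd, hodd]
  ring

theorem deriv_mul_id {a : ℝ → ℝ} (ha : Differentiable ℝ a) :
    deriv (fun x => a x * x) = fun x => deriv a x * x + a x := by
  funext x
  exact ((ha x).hasDerivAt.mul (hasDerivAt_id' x)).deriv.trans (by ring)

theorem deriv_deriv_mul_id {a : ℝ → ℝ} (ha : ContDiff ℝ 2 a) (ξ : ℝ) :
    deriv (deriv fun x => a x * x) ξ = deriv (deriv a) ξ * ξ + 2 * deriv a ξ := by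
  rw [deriv_mul_id (ha.differentiable two_ne_zero)]
  exact (((ha.differentiable_deriv_two ξ).hasDerivAt.mul (hasDerivAt_id' ξ)).add
    (ha.differentiable two_ne_zero ξ).hasDerivAt).deriv.trans (by ring)

theorem abs_deriv_deriv_mul_id_mul_abs_le {a : ℝ → ℝ} (ha : ContDiff ℝ 2 a) {Ca ξ : ℝ}
    (hd1 : |deriv a ξ| ≤ Ca * a ξ / √(1 + ξ ^ 2))
    (hd2 : |deriv (deriv a) ξ| ≤ Ca * a ξ / (1 + ξ ^ 2)) :
    |deriv (deriv fun x => a x * x) ξ| * |ξ| ≤ 3 * (Ca * a ξ) := by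
  have h1 : |deriv a ξ| * |ξ| ≤ Ca * a ξ := by
    have hsqrt : |ξ| ≤ √(1 + ξ ^ 2) := by
      rw [← sqrt_sq_eq_abs]; exact sqrt_le_sqrt (by linarith)
    calc |deriv a ξ| * |ξ| ≤ Ca * a ξ / √(1 + ξ ^ 2) * √(1 + ξ ^ 2) :=
          mul_le_mul hd1 hsqrt (abs_nonneg _) ((abs_nonneg _).trans hd1)
      _ = Ca * a ξ := div_mul_cancel₀ _ (by positivity)
  have h2 : |deriv (deriv a) ξ| * |ξ| ^ 2 ≤ Ca * a ξ := by
    calc |deriv (deriv a) ξ| * |ξ| ^ 2 ≤ Ca * a ξ / (1 + ξ ^ 2) * (1 + ξ ^ 2) :=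
          mul_le_mul hd2 (by rw [sq_abs]; linarith) (by positivity) ((abs_nonneg _).trans hd2)
      _ = Ca * a ξ := div_mul_cancel₀ _ (by positivity)
  rw [deriv_deriv_mul_id ha]
  calc |deriv (deriv a) ξ * ξ + 2 * deriv a ξ| * |ξ|
      ≤ (|deriv (deriv a) ξ| * |ξ| + 2 * |deriv a ξ|) * |ξ| := by
        gcongr
        exact (abs_add_le _ _).trans_eq (by rw [abs_mul, abs_mul, abs_two])
    _ = |deriv (deriv a) ξ| * |ξ| ^ 2 + 2 * (|deriv a ξ| * |ξ|) := by ring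
    _ ≤ 3 * (Ca * a ξ) := by linarith

/-- Two steps of comparability, through the midpoint of `|ξ|` and `|ξ'|`. -/
theorem le_sq_mul_of_abs_le_three_mul {a : ℝ → ℝ} {Ca : ℝ} (hCa : 0 ≤ Ca)
    (hcomp : ∀ ξ ξ' : ℝ, |ξ| ≤ 2 * |ξ'| → |ξ'| ≤ 2 * |ξ| → a ξ ≤ Ca * a ξ') {ξ ξ' : ℝ}
    (h : |ξ| ≤ 3 * |ξ'|) (h' : |ξ'| ≤ 3 * |ξ|) : a ξ ≤ Ca ^ 2 * a ξ' := by
  have hη : |(|ξ| + |ξ'|) / 2| = (|ξ| + |ξ'|) / 2 := abs_of_nonneg (by positivity)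
  calc a ξ ≤ Ca * a ((|ξ| + |ξ'|) / 2) := hcomp _ _ (by linarith) (by linarith)
    _ ≤ Ca * (Ca * a ξ') := by gcongr; exact hcomp _ _ (by linarith) (by linarith)
    _ = Ca ^ 2 * a ξ' := by ring

theorem abs_deriv_deriv_mul_id_le {a : ℝ → ℝ} {Ca : ℝ} (hCa : 0 ≤ Ca) (ha : ContDiff ℝ 2 a)
    (hcomp : ∀ ξ ξ' : ℝ, |ξ| ≤ 2 * |ξ'| → |ξ'| ≤ 2 * |ξ| → a ξ ≤ Ca * a ξ')
    (hd1 : ∀ ξ, |deriv a ξ| ≤ Ca * a ξ / √(1 + ξ ^ 2))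
    (hd2 : ∀ ξ, |deriv (deriv a) ξ| ≤ Ca * a ξ / (1 + ξ ^ 2)) {N ξ : ℝ} (hN : 0 < N)
    (hξ_lo : 3 * N / 4 ≤ |ξ|) (hξ_hi : |ξ| ≤ 3 * N) :
    |deriv (deriv fun x => a x * x) ξ| ≤ 4 * Ca ^ 3 * (a N / N) := by
  have hcomp_N : a ξ ≤ Ca ^ 2 * a N :=
    le_sq_mul_of_abs_le_three_mul hCa hcomp (by rwa [abs_of_pos hN])
      (by rw [abs_of_pos hN]; linarith)
  rw [← mul_div_assoc, le_div_iff₀ hN]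
  calc |deriv (deriv fun x => a x * x) ξ| * N
      = 4 / 3 * (|deriv (deriv fun x => a x * x) ξ| * (3 * N / 4)) := by ring
    _ ≤ 4 / 3 * (|deriv (deriv fun x => a x * x) ξ| * |ξ|) := by gcongr
    _ ≤ 4 / 3 * (3 * (Ca * a ξ)) := by
        gcongr 4 / 3 * ?_; exact abs_deriv_deriv_mul_id_mul_abs_le ha (hd1 ξ) (hd2 ξ)
    _ ≤ 4 / 3 * (3 * (Ca * (Ca ^ 2 * a N))) := by gcongr
    _ = 4 * Ca ^ 3 * a N := by ring

/-- Subcase 1a of the pointwise multiplier bound: for a positive, even, slowly varying symbol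
`a` with symbol regularity up to second order (constant `Ca`), whenever the four frequencies
are comparable to a dyadic `N = 2^k` with `n1+n2+n3+n4 = 0` and `|n2+n3| ≪ N`, `|n1+n2| ≪ N`,
one has `|Σ a(nᵢ) nᵢ| ≲ (a(N)/N) |n2+n3| |n1+n2|`. -/
theorem multiplier_bound_subcase1a (Ca : ℝ) (hCa : 0 < Ca) :
    ∃ δ > (0 : ℝ), ∃ C > (0 : ℝ), ∀ a : ℝ → ℝ,
      (∀ ξ, 0 < a ξ) →
      (∀ ξ, a (-ξ) = a ξ) →
      ContDiff ℝ 2 a →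
      (∀ ξ ξ' : ℝ, |ξ| ≤ 2 * |ξ'| → |ξ'| ≤ 2 * |ξ| → a ξ ≤ Ca * a ξ') →
      (∀ ξ, |deriv a ξ| ≤ Ca * a ξ / Real.sqrt (1 + ξ ^ 2)) →
      (∀ ξ, |deriv (deriv a) ξ| ≤ Ca * a ξ / (1 + ξ ^ 2)) →
      ∀ (k : ℕ) (n1 n2 n3 n4 : ℤ),
        n1 + n2 + n3 + n4 = 0 →
        ((2 : ℝ) ^ k ≤ |(n1 : ℝ)| ∧ |(n1 : ℝ)| < 2 ^ (k + 1)) →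
        ((2 : ℝ) ^ k ≤ |(n2 : ℝ)| ∧ |(n2 : ℝ)| < 2 ^ (k + 1)) →
        ((2 : ℝ) ^ k ≤ |(n3 : ℝ)| ∧ |(n3 : ℝ)| < 2 ^ (k + 1)) →
        ((2 : ℝ) ^ k ≤ |(n4 : ℝ)| ∧ |(n4 : ℝ)| < 2 ^ (k + 1)) →
        |(n2 : ℝ) + n3| ≤ δ * 2 ^ k →
        |(n1 : ℝ) + n2| ≤ δ * 2 ^ k →
        |a n1 * (n1 : ℝ) + a n2 * (n2 : ℝ) + a n3 * (n3 : ℝ) + a n4 * (n4 : ℝ)|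
          ≤ C * (a ((2 : ℝ) ^ k) / 2 ^ k) * |(n2 : ℝ) + n3| * |(n1 : ℝ) + n2| := by
  refine ⟨1 / 8, by norm_num, 4 * Ca ^ 3, by positivity, ?_⟩
  intro a _ heven ha hcomp hd1 hd2 k n1 n2 n3 n4 hsum ⟨hn1_lo, hn1_hi⟩ _ _ _ h23 h12
  have hodd : Function.Odd fun x => a x * x := fun x => by
    simp only [heven]; ring
  have hsum' : (n1 : ℝ) + n2 + n3 + n4 = 0 := by exact_mod_cast hsum
  obtain ⟨d, hd, hsum_eq⟩ := hodd.exists_sum_four_eq_deriv_deriv_mul (ha.mul contDiff_id) hsum'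
  rw [pow_succ] at hn1_hi
  have hd_lo : 3 * 2 ^ k / 4 ≤ |d| := by
    linarith [abs_sub_abs_le_abs_sub (n1 : ℝ) d, abs_sub_comm d n1]
  have hd_hi : |d| ≤ 3 * 2 ^ k := by linarith [abs_sub_abs_le_abs_sub d n1]
  rw [hsum_eq, abs_mul, abs_mul, abs_neg]
  calc |deriv (deriv fun x => a x * x) d| * |(n1 : ℝ) + n2| * |(n2 : ℝ) + n3|
      ≤ 4 * Ca ^ 3 * (a (2 ^ k) / 2 ^ k) * |(n1 : ℝ) + n2| * |(n2 : ℝ) + n3| := by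
        gcongr
        exact abs_deriv_deriv_mul_id_le hCa.le ha hcomp hd1 hd2 (by positivity) hd_lo hd_hi
    _ = _ := by ring
end

section
/- In the High×High×Low×Low frequency regime (|n1| ≤ |n2| ≤ 2^{k3-5} ≤ |n3| ∼ |n4| ∼ 2^{k1*}), if n1+n2+n3+n4 = 0 and n1+n2 ≠ 0, then the resonance function satisfies |n1^3+n2^3+n3^3+n4^3| ∼ |n1+n2| · 2^{2 k1*}. -/
/-!
Since the four frequencies sum to zero, the resonance function factors as
`-3 (n1+n2)(n1+n3)(n2+n3)`. As `|n1|, |n2| ≤ 2^k3 / 32` while `2^k3 ≤ |n3| < 2^(k3+1)`, both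
`|n1+n3|` and `|n2+n3|` lie between `(31/32) 2^k3` and `(65/32) 2^k3`, so their product is
comparable to `2^(2 k3)`; the constants `1` and `13` bound `3 (31/32)^2` and `3 (65/32)^2`.
-/

theorem sum_cubes_eq_of_add_eq_zero {R : Type*} [CommRing R] {a b c d : R}
    (h : a + b + c + d = 0) :
    a ^ 3 + b ^ 3 + c ^ 3 + d ^ 3 = -3 * ((a + b) * ((a + c) * (b + c))) := by
  rw [eq_neg_of_add_eq_zero_right h]
  ring

theorem abs_add_mem_Icc_of_abs_le {α : Type*} [AddCommGroup α] [LinearOrder α]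
    [IsOrderedAddMonoid α] {x y ε A B : α} (hx : |x| ≤ ε) (hy : |y| ∈ Set.Icc A B) :
    |x + y| ∈ Set.Icc (A - ε) (B + ε) := by
  refine ⟨(sub_le_sub hy.1 hx).trans ?_, (abs_add_le x y).trans ?_⟩
  · simpa only [add_comm y x] using abs_sub_abs_le_abs_add y x
  · simpa only [add_comm B ε] using add_le_add hx hy.2

/-- In the High×High×Low×Low frequency regime
`|n1| ≤ |n2| ≤ 2^{k3-5} ≤ |n3| ∼ |n4| ∼ 2^{k3}` with `n1+n2+n3+n4 = 0` and `n1+n2 ≠ 0`,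
the resonance function satisfies `|n1³+n2³+n3³+n4³| ∼ |n1+n2| · 2^{2k3}`. -/
theorem resonance_size_HHLL :
    ∃ c > (0 : ℝ), ∃ C > (0 : ℝ), ∀ (k3 : ℕ) (n1 n2 n3 n4 : ℤ),
      5 ≤ k3 →
      |n1| ≤ |n2| →
      |(n2 : ℝ)| ≤ 2 ^ (k3 - 5) →
      ((2 : ℝ) ^ k3 ≤ |(n3 : ℝ)| ∧ |(n3 : ℝ)| < 2 ^ (k3 + 1)) →
      ((2 : ℝ) ^ k3 ≤ |(n4 : ℝ)| ∧ |(n4 : ℝ)| < 2 ^ (k3 + 1)) →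
      n1 + n2 + n3 + n4 = 0 →
      n1 + n2 ≠ 0 →
      c * |(n1 : ℝ) + n2| * (2 : ℝ) ^ (2 * k3)
          ≤ |(n1 : ℝ) ^ 3 + (n2 : ℝ) ^ 3 + (n3 : ℝ) ^ 3 + (n4 : ℝ) ^ 3| ∧
        |(n1 : ℝ) ^ 3 + (n2 : ℝ) ^ 3 + (n3 : ℝ) ^ 3 + (n4 : ℝ) ^ 3|
          ≤ C * |(n1 : ℝ) + n2| * (2 : ℝ) ^ (2 * k3) := by
  refine ⟨1, one_pos, 13, by norm_num, fun k3 n1 n2 n3 n4 hk h12 h2 h3 _ hsum _ => ?_⟩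
  set A : ℝ := 2 ^ k3
  have hA : 0 < A := by positivity
  have hn2 : |(n2 : ℝ)| ≤ A / 32 := by
    rwa [pow_sub₀ 2 two_ne_zero hk, show (2 : ℝ) ^ 5 = 32 by norm_num] at h2
  have hn1 : |(n1 : ℝ)| ≤ A / 32 := le_trans (by exact_mod_cast h12) hn2
  have hn3 : |(n3 : ℝ)| ∈ Set.Icc A (2 * A) :=
    ⟨h3.1, by rw [pow_succ, mul_comm] at h3; exact h3.2.le⟩
  obtain ⟨hl13, hu13⟩ := abs_add_mem_Icc_of_abs_le hn1 hn3
  obtain ⟨hl23, hu23⟩ := abs_add_mem_Icc_of_abs_le hn2 hn3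
  have hlow : A * A ≤ 3 * (|(n1 : ℝ) + n3| * |(n2 : ℝ) + n3|) := by
    nlinarith [mul_le_mul hl13 hl23 (by linarith) (abs_nonneg _)]
  have hupp : 3 * (|(n1 : ℝ) + n3| * |(n2 : ℝ) + n3|) ≤ 13 * (A * A) := by
    nlinarith [mul_le_mul hu13 hu23 (abs_nonneg _) (by linarith)]
  have hsum' : (n1 : ℝ) + n2 + n3 + n4 = 0 := by exact_mod_cast hsum
  rw [sum_cubes_eq_of_add_eq_zero hsum', abs_mul, abs_mul, abs_mul, abs_neg,
    abs_of_pos (three_pos : (0 : ℝ) < 3), pow_mul', sq]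
  have hs := abs_nonneg ((n1 : ℝ) + n2)
  constructor <;> nlinarith [mul_le_mul_of_nonneg_left hlow hs, mul_le_mul_of_nonneg_left hupp hs]
end

section
/- Suppose n1,…,n7 ∈ ℤ with n1+n2+n3+n4 = 0, n1+n5+n6+n7 = 0, |n2| ≥ |n3| ≥ |n4|, |n5| ≥ |n6| ≥ |n7|, |n5| ∼ |n6| dyadic K5 ≫ |n2| dyadic K2, and K5^2 ≫ K2^3, all frequencies nonzero in the resonance factors. Then |n2^3+n3^3+n4^3-n5^3-n6^3-n7^3| ≳ K5^2. -/
/-!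
Both quadruples sum to zero, so each cubic sum factors as `-3 (a+b)(a+c)(b+c)`, and the second
resonance function is `3 (P₅ - P₂)` with `P₂ = (n1+n2)(n1+n3)(n2+n3)` and
`P₅ = (n1+n5)(n1+n6)(n5+n6)`. Since `|n1| ≲ |n2| ≪ |n5| ∼ |n6|`, the first two factors of `P₅` are
`∼ |n5|` and the third is a nonzero integer, so `|P₅| ≳ |n5|²`, while `|P₂| ≲ |n2|³ ≪ |n5|²`.
-/

section ResonanceFactor

variable {R : Type*}

theorem sum_cubes_of_add_eq_zero [CommRing R] {a b c d : R} (h : a + b + c + d = 0) :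
    a ^ 3 + b ^ 3 + c ^ 3 + d ^ 3 = -3 * ((a + b) * (a + c) * (b + c)) := by
  rw [eq_neg_of_add_eq_zero_right h]
  ring

variable [CommRing R] [LinearOrder R] [IsStrictOrderedRing R] {a b c d : R}

theorem abs_le_three_mul_abs_of_add_eq_zero (h : a + b + c + d = 0) (hcb : |c| ≤ |b|)
    (hdc : |d| ≤ |c|) : |a| ≤ 3 * |b| := by
  have ha : a = -(b + c + d) := by linear_combination h
  rw [ha, abs_neg]
  linarith [abs_add_three b c d]

theorem abs_resonanceFactor_le (h : a + b + c + d = 0) (hcb : |c| ≤ |b|) (hdc : |d| ≤ |c|) :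
    |(a + b) * (a + c) * (b + c)| ≤ 32 * |b| ^ 3 := by
  have ha := abs_le_three_mul_abs_of_add_eq_zero h hcb hdc
  have hab : |a + b| ≤ 4 * |b| := (abs_add_le a b).trans (by linarith)
  have hac : |a + c| ≤ 4 * |b| := (abs_add_le a c).trans (by linarith)
  have hbc : |b + c| ≤ 2 * |b| := (abs_add_le b c).trans (by linarith)
  calc |(a + b) * (a + c) * (b + c)| = |a + b| * |a + c| * |b + c| := by rw [abs_mul, abs_mul]
    _ ≤ (4 * |b|) * (4 * |b|) * (2 * |b|) := by gcongr
    _ = 32 * |b| ^ 3 := by ring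

theorem sq_abs_le_abs_resonanceFactor (ha : 4 * |a| ≤ |b|) (hbc : |b| ≤ 2 * |c|)
    (hbc_one : 1 ≤ |b + c|) : |b| ^ 2 ≤ 8 * |(a + b) * (a + c) * (b + c)| := by
  have hab : |b| ≤ 2 * |a + b| := by
    have := abs_add_le (a + b) (-a)
    rw [add_neg_cancel_comm, abs_neg] at this
    linarith [abs_nonneg b]
  have hac : |b| ≤ 4 * |a + c| := by
    have := abs_add_le (a + c) (-a)
    rw [add_neg_cancel_comm, abs_neg] at this
    linarith
  calc |b| ^ 2 = |b| * |b| * 1 := by ring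
    _ ≤ (2 * |a + b|) * (4 * |a + c|) * |b + c| := by gcongr
    _ = 8 * |(a + b) * (a + c) * (b + c)| := by rw [abs_mul, abs_mul]; ring

end ResonanceFactor

/-- Lower bound on the second resonance function (Subcase BI): if `n1+n2+n3+n4 = 0`,
`n1+n5+n6+n7 = 0`, the quadruples are arranged decreasingly, `|n5| ∼ |n6| ≫ |n2|` with
`|n5|² ≫ |n2|³`, and the resonance factors are nonzero, then
`|n2³+n3³+n4³-n5³-n6³-n7³| ≳ |n5|²`. -/
theorem second_resonance_lower_bound :
    ∃ c > (0 : ℝ), ∃ A : ℝ, 1 ≤ A ∧ ∀ n1 n2 n3 n4 n5 n6 n7 : ℤ,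
      n1 + n2 + n3 + n4 = 0 →
      n1 + n5 + n6 + n7 = 0 →
      |n3| ≤ |n2| → |n4| ≤ |n3| →
      |n6| ≤ |n5| → |n7| ≤ |n6| →
      |n5| ≤ 2 * |n6| →
      (|(n5 : ℝ)| ≥ A * |(n2 : ℝ)|) →
      (|(n5 : ℝ)| ^ 2 ≥ A * |(n2 : ℝ)| ^ 3) →
      (n1 + n2) * (n1 + n3) * (n2 + n3) ≠ 0 →
      (n1 + n5) * (n1 + n6) * (n5 + n6) ≠ 0 →
      c * |(n5 : ℝ)| ^ 2
        ≤ |(n2 : ℝ) ^ 3 + (n3 : ℝ) ^ 3 + (n4 : ℝ) ^ 3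
            - (n5 : ℝ) ^ 3 - (n6 : ℝ) ^ 3 - (n7 : ℝ) ^ 3| := by
  refine ⟨3 / 16, by norm_num, 512, by norm_num, ?_⟩
  intro n1 n2 n3 n4 n5 n6 n7 hs1 hs2 h32 h43 _ _ h56 hA1 hA2 _ hP5
  have hΩ : n2 ^ 3 + n3 ^ 3 + n4 ^ 3 - n5 ^ 3 - n6 ^ 3 - n7 ^ 3
      = 3 * ((n1 + n5) * (n1 + n6) * (n5 + n6)) - 3 * ((n1 + n2) * (n1 + n3) * (n2 + n3)) := by
    linear_combination sum_cubes_of_add_eq_zero hs1 - sum_cubes_of_add_eq_zero hs2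
  have hsmall : 512 * |n2| ≤ |n5| := by exact_mod_cast hA1
  have hupper := abs_resonanceFactor_le hs1 h32 h43
  have hlower := sq_abs_le_abs_resonanceFactor (a := n1)
    (by linarith [abs_le_three_mul_abs_of_add_eq_zero hs1 h32 h43]) h56
    (Int.one_le_abs (right_ne_zero_of_mul hP5))
  rify at hΩ hupper hlower
  rw [hΩ]
  have hΩ_ge := abs_sub_abs_le_abs_sub (3 * ((n1 + n5) * (n1 + n6) * (n5 + n6) : ℝ))
    (3 * ((n1 + n2) * (n1 + n3) * (n2 + n3)))
  rw [abs_mul, abs_mul (3 : ℝ), Nat.abs_ofNat] at hΩ_ge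
  linarith
end
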